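/- arXiv:math/0109144 — 3 statements merged into one kernel-verified Lean document; each statement's English description precedes it below -/
import Mathlib

section
/- A field K admits a linear ordering compatible with the field structure (i.e., K is formally real) if and only if -1 is not a sum of squares in K. -/
section AS
variable {K : Type} [Field K]

/-- A preordering on a field: contains all squares, closed under `+` and `*`, omits `-1`. -/
def IsPreordering (P : Set K) : Prop :=
  (∀ x : K, x ^ 2 ∈ P) ∧ (∀ a ∈ P, ∀ b ∈ P, a + b ∈ P) ∧
    (∀ a ∈ P, ∀ b ∈ P, a * b ∈ P) ∧ (-1 : K) ∉ P

theorem IsPreordering.zero_mem {P : Set K} (h : IsPreordering P) : (0 : K) ∈ P := by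
  simpa using h.1 0

theorem IsPreordering.one_mem {P : Set K} (h : IsPreordering P) : (1 : K) ∈ P := by
  simpa using h.1 1

/-- Extension lemma: if `-a ∉ P`, then `P + a•P` is again a preordering. -/
theorem IsPreordering.extend {P : Set K} (h : IsPreordering P) {a : K} (ha : -a ∉ P) :
    IsPreordering {x | ∃ p ∈ P, ∃ q ∈ P, x = p + a * q} := by
  obtain ⟨hsq, hadd, hmul, hno⟩ := h
  refine ⟨fun x => ⟨x ^ 2, hsq x, 0, by simpa using hsq 0, by ring⟩, ?_, ?_, ?_⟩
  · rintro _ ⟨p, hp, q, hq, rfl⟩ _ ⟨p', hp', q', hq', rfl⟩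
    exact ⟨p + p', hadd _ hp _ hp', q + q', hadd _ hq _ hq', by ring⟩
  · rintro _ ⟨p, hp, q, hq, rfl⟩ _ ⟨p', hp', q', hq', rfl⟩
    refine ⟨p * p' + a ^ 2 * (q * q'), ?_, p * q' + q * p', ?_, by ring⟩
    · exact hadd _ (hmul _ hp _ hp') _ (hmul _ (hsq a) _ (hmul _ hq _ hq'))
    · exact hadd _ (hmul _ hp _ hq') _ (hmul _ hq _ hp')
  · rintro ⟨p, hp, q, hq, hpq⟩
    by_cases hq0 : q = 0
    · exact hno (by rw [hpq, hq0]; simpa using hp)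
    · apply ha
      have : -a = (1 + p) * q * (q⁻¹) ^ 2 := by
        rw [inv_pow, eq_mul_inv_iff_mul_eq₀ (pow_ne_zero 2 hq0)]
        linear_combination q * hpq
      rw [this]
      exact hmul _ (hmul _ (hadd _ (by simpa using hsq 1) _ hp) _ hq) _ (hsq q⁻¹)

theorem isSumSq_mul {x y : K} (hx : IsSumSq x) (hy : IsSumSq y) : IsSumSq (x * y) := by
  induction hx with
  | zero => simpa using IsSumSq.zero
  | @sq_add a S hS ih =>
    have haT : IsSumSq (a * a * y) := by
      clear ih
      induction hy with
      | zero => simpa using IsSumSq.zero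
      | @sq_add b T hT ihT =>
        have : a * a * (b * b + T) = (a * b) * (a * b) + a * a * T := by ring
        rw [this]; exact IsSumSq.sq_add _ ihT
    have : (a * a + S) * y = a * a * y + S * y := by ring
    rw [this]; exact haT.add ih

theorem isSumSq_exists {x : K} (hx : IsSumSq x) : ∃ (n : ℕ) (f : Fin n → K), x = ∑ i, f i ^ 2 := by
  induction hx with
  | zero => exact ⟨0, ![], by simp⟩
  | @sq_add a S hS ih =>
    obtain ⟨n, f, rfl⟩ := ih
    exact ⟨n + 1, Fin.cons a f, by simp [Fin.sum_univ_succ, pow_two]⟩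

end AS

/-- Artin–Schreier criterion: a field `K` admits a linear ordering compatible with
the field structure (i.e. `K` is formally real) if and only if `-1` is not a sum
of squares in `K`. -/
theorem formallyReal_iff_neg_one_not_sum_sq {K : Type} [fK : Field K] :
    (∃ o : LinearOrder K, letI := o; IsStrictOrderedRing K) ↔
      ¬ ∃ (n : ℕ) (f : Fin n → K), (-1 : K) = ∑ i, f i ^ 2 := by
  constructor
  · rintro ⟨o, ho⟩ ⟨n, f, hf⟩
    letI := o
    haveI : IsStrictOrderedRing K := ho
    have h0 : (0 : K) ≤ ∑ i, f i ^ 2 := Finset.sum_nonneg fun i _ => sq_nonneg _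
    rw [← hf] at h0
    linarith
  · intro hns
    -- Zorn's lemma to get a maximal preordering containing the sums of squares
    have hP0 : IsPreordering {x : K | IsSumSq x} := by
      refine ⟨fun x => by simpa [pow_two] using IsSumSq.sq_add x 0 IsSumSq.zero,
        fun a ha b hb => ha.add hb, fun a ha b hb => isSumSq_mul ha hb, fun h => hns ?_⟩
      exact isSumSq_exists h
    obtain ⟨P, -, hPmax⟩ := zorn_subset_nonempty {P : Set K | IsPreordering P}
      (fun c hc hchain ⟨P₀, hP₀⟩ => by
        refine ⟨⋃₀ c, ⟨fun x => Set.mem_sUnion.2 ⟨P₀, hP₀, (hc hP₀).1 x⟩, ?_, ?_, ?_⟩,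
          fun P hP => Set.subset_sUnion_of_mem hP⟩
        · rintro a ⟨A, hA, haA⟩ b ⟨B, hB, hbB⟩
          rcases hchain.total hA hB with hAB | hBA
          · exact ⟨B, hB, (hc hB).2.1 a (hAB haA) b hbB⟩
          · exact ⟨A, hA, (hc hA).2.1 a haA b (hBA hbB)⟩
        · rintro a ⟨A, hA, haA⟩ b ⟨B, hB, hbB⟩
          rcases hchain.total hA hB with hAB | hBA
          · exact ⟨B, hB, (hc hB).2.2.1 a (hAB haA) b hbB⟩
          · exact ⟨A, hA, (hc hA).2.2.1 a haA b (hBA hbB)⟩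
        · rintro ⟨A, hA, hA1⟩
          exact (hc hA).2.2.2 hA1)
      _ hP0
    have hPmem : IsPreordering P := hPmax.prop
    -- maximality gives totality
    have htotal : ∀ a : K, a ∈ P ∨ -a ∈ P := by
      intro a
      by_contra hcon
      push_neg at hcon
      have hext := hPmem.extend hcon.2
      have hsub : P ⊆ {x | ∃ p ∈ P, ∃ q ∈ P, x = p + a * q} :=
        fun p hp => ⟨p, hp, 0, hPmem.zero_mem, by ring⟩
      have hPe : {x | ∃ p ∈ P, ∃ q ∈ P, x = p + a * q} ⊆ P := hPmax.2 hext hsub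
      exact hcon.1 (hPe ⟨0, hPmem.zero_mem, 1, hPmem.one_mem, by ring⟩)
    have hzero : ∀ a : K, a ∈ P → -a ∈ P → a = 0 := by
      intro a ha hna
      by_contra h0
      apply hPmem.2.2.2
      have : (-1 : K) = a * (-a) * (a⁻¹) ^ 2 := by field_simp
      rw [this]
      exact hPmem.2.2.1 _ (hPmem.2.2.1 _ ha _ hna) _ (hPmem.1 a⁻¹)
    -- build the cone
    let C : RingCone K :=
      { carrier := P
        add_mem' := fun {a b} ha hb => hPmem.2.1 a ha b hb
        zero_mem' := hPmem.zero_mem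
        mul_mem' := fun {a b} ha hb => hPmem.2.2.1 a ha b hb
        one_mem' := hPmem.one_mem
        eq_zero_of_mem_of_neg_mem' := fun {a} ha hna => hzero a ha hna }
    haveI : HasMemOrNegMem C := ⟨fun a => htotal a⟩
    haveI : DecidablePred (· ∈ C) := fun _ => Classical.dec _
    letI lor : LinearOrder K := LinearOrder.mkOfAddGroupCone C
    exact ⟨lor, @IsOrderedRing.toIsStrictOrderedRing K _ _ (IsOrderedRing.mkOfCone C) _ _⟩
end

section
/- Let κ be an algebraically closed field of characteristic ≠ 2, and Λ_r = κ((t₁))...((t_r)). Then the r-fold Pfister form ⟨⟨t₁,...,t_r⟩⟩ is universal over Λ_r but anisotropic (does not represent 0 nontrivially). -/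
/-- Auxiliary construction: the iterated Laurent series field together with its
field structure. -/
noncomputable def IteratedLaurentAux (κ : Type) [Field κ] : ℕ → (T : Type) × Field T
  | 0 => ⟨κ, inferInstance⟩
  | n + 1 =>
      letI := (IteratedLaurentAux κ n).2
      ⟨LaurentSeries (IteratedLaurentAux κ n).1, inferInstance⟩

/-- The iterated formal Laurent series field `Λ_r = κ((t₁))…((t_r))`. -/
noncomputable def IteratedLaurent (κ : Type) [Field κ] (r : ℕ) : Type :=
  (IteratedLaurentAux κ r).1

noncomputable instance (κ : Type) [Field κ] (r : ℕ) : Field (IteratedLaurent κ r) :=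
  (IteratedLaurentAux κ r).2

/-- The variables `t₁, …, t_r` as elements of `Λ_r`: the outermost variable `t_r`
is the Laurent series variable of the last layer, and the earlier ones are the
images of the variables of the inner layers under the coefficient embedding. -/
noncomputable def laurentVar (κ : Type) [Field κ] : ∀ r, Fin r → IteratedLaurent κ r
  | 0 => Fin.elim0
  | r + 1 => fun i =>
      (Fin.lastCases
        (HahnSeries.single (1 : ℤ) (1 : IteratedLaurent κ r))
        (fun j => HahnSeries.C (laurentVar κ r j)) i :
        LaurentSeries (IteratedLaurent κ r))

/-- The value of the `r`-fold Pfister form `⟨⟨t₁, …, t_r⟩⟩` on a vector `X`. -/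
noncomputable def pfisterEval {K : Type} [Field K] {r : ℕ} (t : Fin r → K)
    (X : (Fin r → Bool) → K) : K :=
  ∑ S : Fin r → Bool, (∏ i, if S i then t i else 1) * X S ^ 2

/-!
Over `F⸨X⸩` a nonzero `a` is `X ^ (ord a) * lc(a) * u ^ 2`, because a power series with
constant coefficient `1` is a square by Hensel's lemma once `2 ≠ 0`. Hence, by induction on `r`,
every nonzero element of `Λ_r` is a square times a monomial `∏_{i ∈ S} tᵢ` (over `κ` everything
is a square), and such an element is a value of `⟨⟨t₁, …, t_r⟩⟩` at a vector with one nonzero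
entry.

For anisotropy write `⟨⟨t, X⟩⟩ = ⟨⟨t⟩⟩ ⊥ X·⟨⟨t⟩⟩` over `F⸨X⸩`. If `⟨⟨t⟩⟩` is anisotropic over `F`,
its value at a nonzero vector over `F⸨X⸩` has even order `2m`, `m` being the least order of an
entry: the coefficient at `2m` is the value of `⟨⟨t⟩⟩` at the vector of `m`-th coefficients.
The values of `X·⟨⟨t⟩⟩` have odd order, so the two halves cannot cancel.
-/

def pfisterCoeff {M : Type*} [CommMonoid M] {r : ℕ} (t : Fin r → M) (S : Fin r → Bool) : M :=
  ∏ i, if S i then t i else 1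

theorem pfisterEval_eq_sum {K : Type} [Field K] {r : ℕ} (t : Fin r → K)
    (X : (Fin r → Bool) → K) : pfisterEval t X = ∑ S, pfisterCoeff t S * X S ^ 2 := rfl

theorem pfisterCoeff_snoc {M : Type*} [CommMonoid M] {r : ℕ} (t : Fin r → M) (T : M)
    (S : Fin r → Bool) (b : Bool) :
    pfisterCoeff (Fin.snoc t T : Fin (r + 1) → M) (Fin.snoc S b) =
      pfisterCoeff t S * if b then T else 1 := by
  simp only [pfisterCoeff, Fin.prod_univ_castSucc, Fin.snoc_castSucc, Fin.snoc_last]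

theorem map_pfisterCoeff {M N F : Type*} [CommMonoid M] [CommMonoid N] [FunLike F M N]
    [MonoidHomClass F M N] (f : F) {r : ℕ} (t : Fin r → M) (S : Fin r → Bool) :
    f (pfisterCoeff t S) = pfisterCoeff (fun i => f (t i)) S := by
  simp only [pfisterCoeff, map_prod, apply_ite f, map_one]

@[simp]
theorem pfisterEval_zero {K : Type} [Field K] {r : ℕ} (t : Fin r → K) : pfisterEval t 0 = 0 := by
  simp [pfisterEval]

theorem pfisterEval_single {K : Type} [Field K] {r : ℕ} (t : Fin r → K) (S : Fin r → Bool)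
    (b : K) : pfisterEval t (Pi.single S b) = pfisterCoeff t S * b ^ 2 := by
  rw [pfisterEval_eq_sum, Fintype.sum_eq_single S fun S' h => by simp [h]]
  simp

theorem pfisterEval_snoc {K : Type} [Field K] {r : ℕ} (t : Fin r → K) (T : K)
    (X : (Fin (r + 1) → Bool) → K) :
    pfisterEval (Fin.snoc t T : Fin (r + 1) → K) X =
      pfisterEval t (fun S => X (Fin.snoc S false)) +
        T * pfisterEval t (fun S => X (Fin.snoc S true)) := by
  simp only [pfisterEval_eq_sum, ← (Fin.snocEquiv fun _ => Bool).sum_comp, Fintype.sum_prod_type,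
    Fintype.sum_bool, Finset.mul_sum, add_comm]
  congr 1 <;> exact Finset.sum_congr rfl fun S _ => by
    simp only [Fin.snocEquiv, Equiv.coe_fn_mk, pfisterCoeff_snoc, if_true, Bool.false_eq_true,
      if_false]
    ring

theorem pfisterEval_fin_zero {K : Type} [Field K] (t : Fin 0 → K) (X : (Fin 0 → Bool) → K)
    (S : Fin 0 → Bool) : pfisterEval t X = X S ^ 2 := by
  rw [pfisterEval_eq_sum, Fintype.sum_subsingleton _ S, pfisterCoeff, Finset.univ_eq_empty,
    Finset.prod_empty, one_mul]

theorem laurentVar_succ (κ : Type) [Field κ] (r : ℕ) :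
    laurentVar κ (r + 1) =
      Fin.snoc (α := fun _ => LaurentSeries (IteratedLaurent κ r))
        (fun i => HahnSeries.C (laurentVar κ r i)) (HahnSeries.single 1 1) := by
  funext i
  refine Fin.lastCases ?_ (fun j => ?_) i
  · simp only [laurentVar, Fin.lastCases_last, Fin.snoc_last]
    rfl
  · simp only [laurentVar, Fin.lastCases_castSucc, Fin.snoc_castSucc]
    rfl

theorem PowerSeries.exists_sq_eq_of_constantCoeff_eq_sq {R : Type*} [CommRing R]
    (h2 : IsUnit (2 : R)) {q : PowerSeries R} {c : R} (hc : IsUnit c)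
    (hq : PowerSeries.constantCoeff q = c ^ 2) : ∃ s : PowerSeries R, s ^ 2 = q := by
  obtain ⟨s, hs, -⟩ := HenselianRing.is_henselian (I := Ideal.span {PowerSeries.X})
    (Polynomial.X ^ 2 - Polynomial.C q) (Polynomial.monic_X_pow_sub_C q two_ne_zero)
    (PowerSeries.C c)
    (by simp [Ideal.mem_span_singleton, PowerSeries.X_dvd_iff, hq])
    (by
      refine IsUnit.map _ ?_
      simp only [Polynomial.derivative_sub, Polynomial.derivative_X_pow, Polynomial.derivative_C,
        sub_zero, Polynomial.eval_mul, Polynomial.eval_C, Polynomial.eval_pow, Polynomial.eval_X,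
        Nat.cast_ofNat, ← map_ofNat PowerSeries.C, ← map_pow, ← map_mul]
      exact (h2.mul (hc.pow _)).map PowerSeries.C)
  exact ⟨s, by simpa [sub_eq_zero] using hs⟩

namespace HahnSeries

variable {Γ R : Type*} [AddCommMonoid Γ] [LinearOrder Γ] [IsOrderedCancelAddMonoid Γ] [Semiring R]

theorem coeff_sq_of_le_orderTop {x : HahnSeries Γ R} {m : Γ}
    (hm : (m : WithTop Γ) ≤ x.orderTop) : (x ^ 2).coeff (m + m) = x.coeff m ^ 2 := by
  by_cases hx : x = 0
  · simp [hx]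
  rw [← order_eq_orderTop_of_ne_zero hx, WithTop.coe_le_coe] at hm
  rcases hm.lt_or_eq with hlt | rfl
  · rw [coeff_eq_zero_of_lt_order hlt, pow_two, pow_two, zero_mul]
    refine coeff_eq_zero_of_lt_orderTop (lt_of_lt_of_le ?_ orderTop_add_le_mul)
    rw [← order_eq_orderTop_of_ne_zero hx, ← WithTop.coe_add, WithTop.coe_lt_coe]
    exact add_lt_add hlt hlt
  · rw [pow_two, pow_two, coeff_mul_order_add_order, leadingCoeff_eq]

theorem coeff_sq_eq_zero_of_lt_add {x : HahnSeries Γ R} {m : Γ}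
    (hm : (m : WithTop Γ) ≤ x.orderTop) {k : Γ} (hk : k < m + m) : (x ^ 2).coeff k = 0 := by
  refine coeff_eq_zero_of_lt_orderTop (lt_of_lt_of_le ?_ (pow_two x ▸ orderTop_add_le_mul))
  exact lt_of_lt_of_le (WithTop.coe_lt_coe.2 hk) (WithTop.coe_add m m ▸ add_le_add hm hm)
theorem exists_orderTop_sum_C_mul_sq_eq {ι : Type*} [Fintype ι] {c : ι → R}
    (hc : ∀ y : ι → R, ∑ i, c i * y i ^ 2 = 0 → y = 0) {Y : ι → HahnSeries Γ R} (hY : Y ≠ 0) :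
    ∃ m : Γ, (∑ i, C (c i) * Y i ^ 2).orderTop = ↑(m + m) := by
  obtain ⟨i₀, hi₀⟩ := Function.ne_iff.1 hY
  have : Nonempty ι := ⟨i₀⟩
  obtain ⟨i, hmin⟩ := Finite.exists_min fun i => (Y i).orderTop
  have hYi : Y i ≠ 0 := fun h =>
    hi₀ (orderTop_eq_top.1 (top_le_iff.1 (by simpa [h] using hmin i₀)))
  have hle : ∀ j, ((Y i).order : WithTop Γ) ≤ (Y j).orderTop :=
    order_eq_orderTop_of_ne_zero hYi ▸ hmin
  have hcoeff (k : Γ) : (∑ j, C (c j) * Y j ^ 2).coeff k = ∑ j, c j * (Y j ^ 2).coeff k := by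
    simp only [coeff_sum, C_mul_eq_smul, coeff_smul, smul_eq_mul]
  refine ⟨(Y i).order, orderTop_eq_of_le ?_ fun k hk => ?_⟩
  · rw [mem_support, hcoeff]
    simp only [coeff_sq_of_le_orderTop (hle _)]
    exact fun h => hYi (coeff_order_eq_zero.1 (congrFun (hc _ h) i))
  · by_contra! hlt
    exact hk (by simp [coeff_sq_eq_zero_of_lt_add (hle _) hlt])

end HahnSeries

namespace LaurentSeries

open HahnSeries
open scoped LaurentSeries

variable {F : Type} [Field F]

theorem exists_eq_single_order_mul_sq (h2 : (2 : F) ≠ 0) {a : F⸨X⸩} (ha : a ≠ 0) :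
    ∃ b : F⸨X⸩, a = single a.order a.leadingCoeff * b ^ 2 := by
  have hlc : a.leadingCoeff ≠ 0 := leadingCoeff_ne_zero.2 ha
  obtain ⟨s, hs⟩ := PowerSeries.exists_sq_eq_of_constantCoeff_eq_sq h2.isUnit isUnit_one
    (q := PowerSeries.C a.leadingCoeff⁻¹ * a.powerSeriesPart)
    (by simp [← PowerSeries.coeff_zero_eq_constantCoeff_apply, ← leadingCoeff_eq, hlc])
  refine ⟨ofPowerSeries ℤ F s, ?_⟩
  calc a = (single a.order 1 : F⸨X⸩) * ofPowerSeries ℤ F a.powerSeriesPart :=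
        (single_order_mul_powerSeriesPart a).symm
    _ = (single a.order 1 : F⸨X⸩) *
          ofPowerSeries ℤ F (PowerSeries.C a.leadingCoeff * s ^ 2) := by
      rw [hs, ← mul_assoc, ← map_mul PowerSeries.C, mul_inv_cancel₀ hlc, map_one PowerSeries.C,
        one_mul]
    _ = single a.order a.leadingCoeff * ofPowerSeries ℤ F s ^ 2 := by
      rw [PowerSeries.coe_mul, PowerSeries.coe_C, PowerSeries.coe_pow, ← mul_assoc, C_apply,
        single_mul_single, add_zero, one_mul]

theorem exists_eq_pfisterCoeff_snoc_mul_sq (h2 : (2 : F) ≠ 0) {r : ℕ} {t : Fin r → F}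
    (ht : ∀ c : F, c ≠ 0 → ∃ (S : Fin r → Bool) (d : F), c = pfisterCoeff t S * d ^ 2)
    {a : F⸨X⸩} (ha : a ≠ 0) :
    ∃ (S : Fin (r + 1) → Bool) (b : F⸨X⸩),
      a = pfisterCoeff (Fin.snoc (fun i => C (t i)) (single 1 1) : Fin (r + 1) → F⸨X⸩) S *
        b ^ 2 := by
  obtain ⟨b, hb⟩ := exists_eq_single_order_mul_sq h2 ha
  obtain ⟨S, d, hd⟩ := ht _ (leadingCoeff_ne_zero.2 ha)
  obtain ⟨m, hm | hm⟩ := Int.even_or_odd' a.order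
  · refine ⟨Fin.snoc S false, single m d * b, ?_⟩
    rw [pfisterCoeff_snoc, ← map_pfisterCoeff, hb, hm, hd, mul_pow, C_apply, pow_two (single m d)]
    simp only [Bool.false_eq_true, if_false, mul_one, ← mul_assoc, single_mul_single]
    rw [show (0 : ℤ) + (m + m) = 2 * m by ring, mul_assoc _ d, ← pow_two]
  · refine ⟨Fin.snoc S true, single m d * b, ?_⟩
    rw [pfisterCoeff_snoc, ← map_pfisterCoeff, hb, hm, hd, mul_pow, C_apply, pow_two (single m d)]
    simp only [if_true, mul_one, ← mul_assoc, single_mul_single]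
    rw [show (0 : ℤ) + 1 + (m + m) = 2 * m + 1 by ring, mul_assoc _ d, ← pow_two]

theorem eq_zero_of_pfisterEval_snoc_eq_zero {r : ℕ} {t : Fin r → F}
    (ht : ∀ y : (Fin r → Bool) → F, pfisterEval t y = 0 → y = 0)
    {X : (Fin (r + 1) → Bool) → F⸨X⸩}
    (hX : pfisterEval (Fin.snoc (fun i => C (t i)) (single 1 1) : Fin (r + 1) → F⸨X⸩) X = 0) :
    X = 0 := by
  rw [pfisterEval_snoc] at hX
  set Y₀ : (Fin r → Bool) → F⸨X⸩ := fun S => X (Fin.snoc S false)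
  set Y₁ : (Fin r → Bool) → F⸨X⸩ := fun S => X (Fin.snoc S true)
  have heven {Y : (Fin r → Bool) → F⸨X⸩} (hY : Y ≠ 0) :
      ∃ m : ℤ, (pfisterEval (fun i => C (t i)) Y).orderTop = ↑(m + m) := by
    simpa only [pfisterEval_eq_sum, ← map_pfisterCoeff] using
      exists_orderTop_sum_C_mul_sq_eq (c := pfisterCoeff t) ht hY
  have hY₁ : Y₁ = 0 := by
    by_contra hY₁
    obtain ⟨m₁, hm₁⟩ := heven hY₁
    have hodd : (pfisterEval (fun i => C (t i)) Y₀).orderTop = ↑(1 + (m₁ + m₁)) := by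
      rw [eq_neg_of_add_eq_zero_left hX, orderTop_neg, orderTop_mul, orderTop_single one_ne_zero,
        hm₁]
      rfl
    have hY₀ : Y₀ ≠ 0 := by
      rintro hY₀
      rw [hY₀, pfisterEval_zero, orderTop_zero] at hodd
      exact WithTop.top_ne_coe hodd
    obtain ⟨m₀, hm₀⟩ := heven hY₀
    rw [hm₀, WithTop.coe_inj] at hodd
    omega
  have hY₀ : Y₀ = 0 := by
    by_contra hY₀
    obtain ⟨m₀, hm₀⟩ := heven hY₀
    rw [hY₁, pfisterEval_zero, mul_zero, add_zero] at hX
    rw [hX, orderTop_zero] at hm₀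
    exact WithTop.top_ne_coe hm₀
  funext S'
  obtain ⟨S, b, rfl⟩ : ∃ S b, S' = Fin.snoc S b :=
    ⟨Fin.init S', S' (Fin.last r), (Fin.snoc_init_self S').symm⟩
  cases b
  exacts [congrFun hY₀ S, congrFun hY₁ S]

end LaurentSeries

namespace IteratedLaurent

variable {κ : Type} [Field κ]

theorem two_ne_zero (h2 : (2 : κ) ≠ 0) : ∀ r, (2 : IteratedLaurent κ r) ≠ 0
  | 0 => h2
  | r + 1 => by
    change (2 : LaurentSeries (IteratedLaurent κ r)) ≠ 0
    rw [← map_ofNat HahnSeries.C 2]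
    exact HahnSeries.C_ne_zero (two_ne_zero h2 r)

theorem exists_eq_pfisterCoeff_mul_sq [IsAlgClosed κ] (h2 : (2 : κ) ≠ 0) :
    ∀ (r : ℕ) (a : IteratedLaurent κ r), a ≠ 0 →
      ∃ (S : Fin r → Bool) (b : IteratedLaurent κ r), a = pfisterCoeff (laurentVar κ r) S * b ^ 2
  | 0, a, _ => by
    obtain ⟨b, hb⟩ := IsAlgClosed.exists_pow_nat_eq (k := κ) a two_pos
    refine ⟨Fin.elim0, b, ?_⟩
    rw [pfisterCoeff, Finset.univ_eq_empty, Finset.prod_empty, one_mul]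
    exact hb.symm
  | r + 1, a, ha => by
    rw [laurentVar_succ]
    exact LaurentSeries.exists_eq_pfisterCoeff_snoc_mul_sq (two_ne_zero h2 r)
      (exists_eq_pfisterCoeff_mul_sq h2 r) ha

theorem eq_zero_of_pfisterEval_eq_zero :
    ∀ (r : ℕ) (X : (Fin r → Bool) → IteratedLaurent κ r),
      pfisterEval (laurentVar κ r) X = 0 → X = 0
  | 0, X, hX => funext fun S => sq_eq_zero_iff.1 (pfisterEval_fin_zero _ X S ▸ hX)
  | r + 1, X, hX => by
    rw [laurentVar_succ] at hX
    exact LaurentSeries.eq_zero_of_pfisterEval_snoc_eq_zero (eq_zero_of_pfisterEval_eq_zero r) hX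

end IteratedLaurent

/-- Let `κ` be an algebraically closed field of characteristic `≠ 2` and
`Λ_r = κ((t₁))…((t_r))` the iterated formal Laurent series field.  Then the
`r`-fold Pfister form `⟨⟨t₁, …, t_r⟩⟩` is universal over `Λ_r` (it represents
every nonzero element) but anisotropic (it does not represent `0`
nontrivially). -/
theorem pfister_universal_anisotropic_iteratedLaurent (κ : Type) [Field κ]
    [IsAlgClosed κ] (h2 : ringChar κ ≠ 2) (r : ℕ) :
    (∀ a : IteratedLaurent κ r, a ≠ 0 →
        ∃ X : (Fin r → Bool) → IteratedLaurent κ r,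
          pfisterEval (laurentVar κ r) X = a) ∧
    (∀ X : (Fin r → Bool) → IteratedLaurent κ r,
        pfisterEval (laurentVar κ r) X = 0 → X = 0) := by
  refine ⟨fun a ha => ?_, IteratedLaurent.eq_zero_of_pfisterEval_eq_zero r⟩
  obtain ⟨S, b, rfl⟩ := IteratedLaurent.exists_eq_pfisterCoeff_mul_sq (Ring.two_ne_zero h2) r a ha
  exact ⟨Pi.single S b, pfisterEval_single _ _ _⟩
end

section
/- If K and L are elementarily equivalent fields with common prime field k, and K_abs, L_abs denote the relative algebraic closures of k in K and L respectively, then K_abs and L_abs are isomorphic fields. -/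
/-!
An integer polynomial `q` has a root in a field exactly when the field satisfies the sentence
`∃ x, q(x) = 0`, so elementarily equivalent fields `K` and `L` have the same integer polynomials
with a root; in particular they have the same characteristic, hence a common prime field `F`.
Every polynomial over `F = ℚ` or `F = 𝔽_p` is a nonzero multiple of the image of an integer
polynomial, so the same polynomials over `F` have roots in `K`, in `L`, and in the algebraic
closures of `F` inside them. By Isaacs' theorem, algebraic extensions of `F` in which the same
polynomials have roots are isomorphic.
-/

open FirstOrder Language Polynomial

namespace FirstOrder.Ring

noncomputable def hasRootSentence (q : ℤ[X]) : Language.ring.Sentence :=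
  ∃' (termOfFreeCommRing (q.eval₂ (Int.castRingHom _) (FreeCommRing.of (Sum.inr 0))) =' 0)

theorem realize_hasRootSentence {R : Type*} [CommRing R] [CompatibleRing R] (q : ℤ[X]) :
    R ⊨ hasRootSentence q ↔ ∃ x : R, aeval x q = 0 := by
  simp only [Sentence.Realize, Formula.Realize, hasRootSentence, BoundedFormula.realize_ex,
    BoundedFormula.realize_bdEqual, realize_termOfFreeCommRing, hom_eval₂,
    RingHom.ext_int _ (Int.castRingHom R), FreeCommRing.lift_of, Sum.elim_inr, realize_zero,
    aeval_def]
  rfl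

end FirstOrder.Ring

theorem FirstOrder.Language.ElementarilyEquivalent.setOf_exists_aeval_int_eq_zero_eq
    {K L : Type*} [CommRing K] [Ring.CompatibleRing K] [CommRing L] [Ring.CompatibleRing L]
    (h : K ≅[Language.ring] L) :
    {q : ℤ[X] | ∃ x : K, aeval x q = 0} = {q | ∃ y : L, aeval y q = 0} := by
  ext q
  simp only [Set.mem_ofPred_eq, ← FirstOrder.Ring.realize_hasRootSentence, h.realize_sentence]

theorem Polynomial.aeval_eq_zero_iff_of_map_eq_smul {F M : Type*} [Field F] [CommRing M]
    [Algebra F M] {p : F[X]} {q : ℤ[X]} {c : F} (hc : c ≠ 0)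
    (hq : q.map (algebraMap ℤ F) = c • p) (x : M) :
    aeval x q = 0 ↔ aeval x p = 0 := by
  rw [← aeval_map_algebraMap F, hq, map_smul, smul_eq_zero_iff_right hc]

theorem ZMod.exists_map_int_eq_smul (n : ℕ) [Fact n.Prime] (p : (ZMod n)[X]) :
    ∃ q : ℤ[X], ∃ c : ZMod n, c ≠ 0 ∧ q.map (algebraMap ℤ (ZMod n)) = c • p :=
  have ⟨q, hq⟩ := map_surjective (algebraMap ℤ (ZMod n)) ZMod.intCast_surjective p
  ⟨q, 1, one_ne_zero, by rw [hq, one_smul]⟩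

theorem Rat.exists_map_int_eq_smul (p : ℚ[X]) :
    ∃ q : ℤ[X], ∃ c : ℚ, c ≠ 0 ∧ q.map (algebraMap ℤ ℚ) = c • p :=
  have ⟨b, hb, hmap⟩ := IsLocalization.integerNormalization_spec (nonZeroDivisors ℤ) p
  ⟨_, b, Int.cast_ne_zero.2 (nonZeroDivisors.ne_zero hb), by rw [hmap, Int.cast_smul_eq_zsmul]⟩

section

variable {F : Type*} [Field F]

theorem setOf_exists_aeval_algebraicClosure_eq_zero (K : Type*) [Field K] [Algebra F K] :
    {p : F[X] | ∃ x : algebraicClosure F K, aeval x p = 0} = {p | ∃ x : K, aeval x p = 0} := by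
  ext p
  refine ⟨fun ⟨x, hx⟩ ↦ ⟨x, by rw [IntermediateField.aeval_coe, hx, ZeroMemClass.coe_zero]⟩,
    fun ⟨x, hx⟩ ↦ ?_⟩
  rcases eq_or_ne p 0 with rfl | hp
  · exact ⟨0, by simp⟩
  · exact ⟨⟨x, mem_algebraicClosure_iff.2 ⟨p, hp, hx⟩⟩,
      Subtype.val_injective (by rwa [← IntermediateField.aeval_coe])⟩

theorem integralClosure_bot_toSubring_eq {K : Type*} [Field K] [Algebra F K]
    (h : (⊥ : Subfield K) = (algebraMap F K).fieldRange) :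
    (integralClosure (⊥ : Subfield K) K).toSubring = (algebraicClosure F K).toSubring := by
  ext x
  let e : F ≃+* (⊥ : Subfield K) :=
    (algebraMap F K).rangeRestrictFieldEquiv.trans (RingEquiv.subfieldCongr h.symm)
  exact ((e.isIntegral_iff rfl x).symm.trans isAlgebraic_iff_isIntegral.symm).trans
    mem_algebraicClosure_iff.symm

variable {K L : Type*} [Field K] [Field L] [Algebra F K] [Algebra F L]
  (hF : ∀ p : F[X], ∃ q : ℤ[X], ∃ c : F, c ≠ 0 ∧ q.map (algebraMap ℤ F) = c • p)
  (h : {q : ℤ[X] | ∃ x : K, aeval x q = 0} = {q | ∃ y : L, aeval y q = 0})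
include hF h

theorem setOf_exists_aeval_eq_zero_eq_of_int :
    {p : F[X] | ∃ x : K, aeval x p = 0} = {p | ∃ y : L, aeval y p = 0} := by
  ext p
  obtain ⟨q, c, hc, hq⟩ := hF p
  simp only [Set.mem_ofPred_eq, ← aeval_eq_zero_iff_of_map_eq_smul hc hq]
  exact Set.ext_iff.1 h q

theorem nonempty_algebraicClosure_algEquiv_of_int :
    Nonempty (algebraicClosure F K ≃ₐ[F] algebraicClosure F L) :=
  Field.nonempty_algEquiv_of_aeval_eq_zero_eq <| by
    rw [setOf_exists_aeval_algebraicClosure_eq_zero, setOf_exists_aeval_algebraicClosure_eq_zero,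
      setOf_exists_aeval_eq_zero_eq_of_int hF h]

theorem nonempty_integralClosure_bot_ringEquiv_of_int
    (hK : (⊥ : Subfield K) = (algebraMap F K).fieldRange)
    (hL : (⊥ : Subfield L) = (algebraMap F L).fieldRange) :
    Nonempty (integralClosure (⊥ : Subfield K) K ≃+* integralClosure (⊥ : Subfield L) L) :=
  have ⟨e⟩ := nonempty_algebraicClosure_algEquiv_of_int hF h
  ⟨(RingEquiv.subringCongr (integralClosure_bot_toSubring_eq hK)).trans <|
    e.toRingEquiv.trans (RingEquiv.subringCongr (integralClosure_bot_toSubring_eq hL)).symm⟩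

end

/-- If `K` and `L` are elementarily equivalent fields, and `K_abs`, `L_abs`
denote the relative algebraic closures of the prime fields in `K` and `L`
respectively, then `K_abs` and `L_abs` are isomorphic fields. -/
theorem absolute_subfields_isomorphic_of_elementarilyEquivalent
    {K L : Type} [Field K] [Field L]
    (h : letI := Ring.compatibleRingOfRing K
         letI := Ring.compatibleRingOfRing L
         K ≅[Language.ring] L) :
    Nonempty
      ((integralClosure (⊥ : Subfield K) K) ≃+* (integralClosure (⊥ : Subfield L) L)) := by
  let := Ring.compatibleRingOfRing K
  let := Ring.compatibleRingOfRing L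
  have hroots := h.setOf_exists_aeval_int_eq_zero_eq
  obtain ⟨p, _⟩ := CharP.exists K
  have : CharP L p :=
    Field.charP_iff_model_fieldOfChar.1 (h.theory_model_iff.1 inferInstance)
  rcases CharP.char_is_prime_or_zero K p with hp | rfl
  · have := Fact.mk hp
    let := ZMod.algebra K p
    let := ZMod.algebra L p
    exact nonempty_integralClosure_bot_ringEquiv_of_int (ZMod.exists_map_int_eq_smul p) hroots
      (Subfield.bot_eq_of_zMod_algebra p) (Subfield.bot_eq_of_zMod_algebra p)
  · have := CharP.charP_to_charZero K
    have := CharP.charP_to_charZero L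
    exact nonempty_integralClosure_bot_ringEquiv_of_int Rat.exists_map_int_eq_smul hroots
      Subfield.bot_eq_of_charZero Subfield.bot_eq_of_charZero
end
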